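/- arXiv:2211.05840 — 2 statements merged into one kernel-verified Lean document; each statement's English description precedes it below -/
import Mathlib

section
/- Let p₁ < p₂ be real numbers, P = [p₁, p₂], let L be a continuous linear operator on C(P, ℝ) satisfying Condition VII (there exists a constant K such that for every u ∈ C(P, ℝ) with u(p) > 0 for all p ∈ P, one has (L u)(p) − K·u(p) > 0 for all p ∈ P) and Condition VIII (there exists h ∈ C(P, ℝ) with L h = 0 and h(p) > 0 on P). Let D ∈ C(P, ℝ), d_min = min over p ∈ P of D(p), d_max = max over p ∈ P of D(p). Fix a point (x₀, t₀) with t₀ > 0 and let Δ₀ = {(x, t) : 0 ≤ t ≤ t₀ and x₀ − d_max·(t₀ − t) ≤ x ≤ x₀ − d_min·(t₀ − t)} be its characteristic triangle and Γ₀ = [x₀ − d_max·t₀, x₀ − d_min·t₀] × {0} its base on the axis t = 0. Let u : ℝ × [0, t₀] → C(P, ℝ) be continuously differentiable in (x, t) and f : ℝ × [0, t₀] × P → ℝ be continuous, satisfying the transport equation ∂ₜ u(x, t)(p) + D(p)·∂ₓ u(x, t)(p) = (L (u(x, t)))(p) + f(x, t, p) for all (x, t) ∈ Δ₀ and p ∈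 P, with initial values u(x, 0)(p) = u⁰(x, p). If f(x, t, p) > 0 for all (x, t) ∈ Δ₀ and all p ∈ P, and u⁰(x, p) > 0 for all (x, 0) ∈ Γ₀ and all p ∈ P, then u(x, t)(p) > 0 for all (x, t) ∈ Δ₀ and all p ∈ P. -/
open Set

/-- The characteristic triangle `Δ₀` of the point `(x₀, t₀)` for the transport
operator `∂ₜ + D(p) ∂ₓ`, bounded by the extreme characteristics with speeds
`dmin` and `dmax`. -/
def charTriangle (dmin dmax x₀ t₀ : ℝ) : Set (ℝ × ℝ) :=
  {q : ℝ × ℝ | 0 ≤ q.2 ∧ q.2 ≤ t₀ ∧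
    x₀ - dmax * (t₀ - q.2) ≤ q.1 ∧ q.1 ≤ x₀ - dmin * (t₀ - q.2)}

/-- The base `Γ₀` of the characteristic triangle on the axis `t = 0`
(the domain of influence of the initial data). -/
def charBase (dmin dmax x₀ t₀ : ℝ) : Set ℝ :=
  Icc (x₀ - dmax * t₀) (x₀ - dmin * t₀)

/-! Suppose `u` is not positive on `Δ₀`. By compactness there is a point `(x, t, p)` with
`u(x, t)(p) ≤ 0` and `t` minimal. Then `t > 0` because the initial data are positive, and along
every backward characteristic `s ↦ (x + D(p')(s - t), s)`, which stays in `Δ₀`, the value at `p'`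
is positive for `s < t`. Hence `u(x, t) ≥ 0` with `u(x, t)(p) = 0`, and the derivative of
`u(·)(p)` along its characteristic at `s = t` is `≤ 0`. By the transport equation this derivative
is `(L u(x, t))(p) + f(x, t, p) > 0`: Condition VII applied to `u(x, t) + ε h`, together with
`L h = 0`, gives `(L u(x, t))(p) ≥ 0`. -/

open Filter Topology

theorem hasDerivWithinAt_sub_along_line_of_partial {E : Type*} [NormedAddCommGroup E]
    [NormedSpace ℝ E] {v vx : ℝ → ℝ → E} {s : Set ℝ} {x t d : ℝ}
    (hvx : ∀ y, ∀ τ ∈ s, HasDerivAt (v · τ) (vx y τ) y)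
    (hvx_cont : ContinuousWithinAt (fun q : ℝ × ℝ => vx q.1 q.2) (univ ×ˢ s) (x, t)) :
    HasDerivWithinAt (fun τ => v (x + d * (τ - t)) τ - v x τ) (d • vx x t) s t := by
  rw [hasDerivWithinAt_iff_isLittleO, Asymptotics.isLittleO_iff]
  intro ε hε
  set δ := ε / (|d| + 1)
  have hδ : 0 < δ := by positivity
  have hδd : δ * |d| ≤ ε := by
    rw [div_mul_eq_mul_div, div_le_iff₀ (by positivity)]
    nlinarith [abs_nonneg d]
  -- mean value inequality for `y ↦ v y τ - y • vx x t` on a segment where `vx` is `δ`-close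
  -- to `vx x t`
  have hnear : ∀ᶠ q in 𝓝[s] t ×ˢ 𝓝[univ] x, ‖vx q.2 q.1 - vx x t‖ < δ ∧ q.1 ∈ s := by
    have hc := hvx_cont.eventually (Metric.ball_mem_nhds _ hδ)
    rw [nhdsWithin_prod_eq, eventually_swap_iff] at hc
    refine (hc.and (tendsto_fst.eventually eventually_mem_nhdsWithin)).mono fun q hq => ?_
    exact ⟨by simpa [dist_eq_norm] using hq.1, hq.2⟩
  have hline : Tendsto (fun τ => x + d * (τ - t)) (𝓝[s] t) (𝓝 x) :=
    (Continuous.tendsto' (by fun_prop) t x (by simp)).mono_left nhdsWithin_le_nhds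
  filter_upwards [hnear.segment_of_prod_nhdsWithin (r := fun τ y => ‖vx y τ - vx x t‖ < δ ∧ τ ∈ s)
    tendsto_const_nhds hline (.of_forall fun _ => subset_univ _)] with τ hτ
  have hτs : τ ∈ s := (hτ x (left_mem_segment ..)).2
  have hmvt := Convex.norm_image_sub_le_of_norm_hasDerivWithin_le
    (f := fun y => v y τ - y • vx x t)
    (fun y _ => ((hvx y τ hτs).sub ((hasDerivAt_id y).smul_const (vx x t))).hasDerivWithinAt)
    (fun y hy => by simpa using (hτ y hy).1.le) (convex_segment ..)
    (left_mem_segment ..) (right_mem_segment ..)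
  calc ‖v (x + d * (τ - t)) τ - v x τ - (v (x + d * (t - t)) t - v x t) - (τ - t) • d • vx x t‖
      = ‖(v (x + d * (τ - t)) τ - (x + d * (τ - t)) • vx x t) - (v x τ - x • vx x t)‖ := by
        simp only [sub_self, mul_zero, add_zero, sub_zero]
        congr 1
        module
    _ ≤ δ * ‖x + d * (τ - t) - x‖ := hmvt
    _ ≤ ε * ‖τ - t‖ := by
        rw [add_sub_cancel_left, norm_mul, Real.norm_eq_abs, ← mul_assoc]
        gcongr

theorem hasDerivWithinAt_along_line_of_partials {E : Type*} [NormedAddCommGroup E]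
    [NormedSpace ℝ E] {v vx : ℝ → ℝ → E} {s : Set ℝ} {x t d : ℝ} {a : E}
    (hvt : HasDerivWithinAt (v x) a s t)
    (hvx : ∀ y, ∀ τ ∈ s, HasDerivAt (v · τ) (vx y τ) y)
    (hvx_cont : ContinuousWithinAt (fun q : ℝ × ℝ => vx q.1 q.2) (univ ×ˢ s) (x, t)) :
    HasDerivWithinAt (fun τ => v (x + d * (τ - t)) τ) (a + d • vx x t) s t := by
  convert (hasDerivWithinAt_sub_along_line_of_partial (d := d) hvx hvx_cont).add hvt using 1
  · funext τ
    exact (sub_add_cancel _ _).symm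
  · rw [add_comm]

theorem HasDerivWithinAt.nonpos_of_pos_Ico {f : ℝ → ℝ} {f' a b : ℝ} (hab : a < b)
    (hf : HasDerivWithinAt f f' (Icc a b) b) (hpos : ∀ x ∈ Ico a b, 0 < f x) (hb : f b ≤ 0) :
    f' ≤ 0 := by
  have hmin : IsMinOn f (Icc a b) b := isMinOn_iff.2 fun x hx => by
    rcases hx.2.lt_or_eq with hxb | rfl
    exacts [hb.trans (hpos x ⟨hx.1, hxb⟩).le, le_rfl]
  have hdir : a - b ∈ posTangentConeAt (Icc a b) b :=
    sub_mem_posTangentConeAt_of_segment_subset (by rw [segment_symm, segment_eq_Icc hab.le])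
  have := hmin.localize.hasFDerivWithinAt_nonneg hf hdir
  rw [ContinuousLinearMap.toSpanSingleton_apply, smul_eq_mul] at this
  nlinarith

theorem ContinuousWithinAt.nonneg_of_pos_Ico {f : ℝ → ℝ} {a b : ℝ} (hab : a < b)
    (hf : ContinuousWithinAt f (Icc a b) b) (hpos : ∀ x ∈ Ico a b, 0 < f x) : 0 ≤ f b := by
  have : (𝓝[Ico a b] b).NeBot := by
    rw [← mem_closure_iff_nhdsWithin_neBot, closure_Ico hab.ne]
    exact right_mem_Icc.2 hab.le
  exact ge_of_tendsto ((hf.mono Ico_subset_Icc_self).tendsto)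
    (eventually_mem_nhdsWithin.mono fun x hx => (hpos x hx).le)

theorem ContinuousLinearMap.apply_nonneg_of_nonneg_of_eq_zero {X : Type*} [TopologicalSpace X]
    {L : C(X, ℝ) →L[ℝ] C(X, ℝ)} {K : ℝ}
    (hL : ∀ u : C(X, ℝ), (∀ p, 0 < u p) → ∀ p, 0 < L u p - K * u p)
    {h : C(X, ℝ)} (hLh : L h = 0) (hh : ∀ p, 0 < h p)
    {w : C(X, ℝ)} (hw : ∀ p, 0 ≤ w p) {p : X} (hwp : w p = 0) : 0 ≤ L w p := by
  have hbound : ∀ ε > 0, ε * (K * h p) < L w p := by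
    intro ε hε
    have hpos : ∀ q, 0 < (w + ε • h) q := fun q => by
      simpa using add_pos_of_nonneg_of_pos (hw q) (mul_pos hε (hh q))
    have := hL _ hpos p
    simp only [map_add, map_smul, hLh, smul_zero, add_zero, ContinuousMap.add_apply,
      ContinuousMap.smul_apply, smul_eq_mul, hwp] at this
    linarith
  have hlim : Tendsto (fun ε => ε * (K * h p)) (𝓝[>] 0) (𝓝 0) := by
    simpa using ((continuous_mul_const (K * h p)).tendsto 0).mono_left nhdsWithin_le_nhds
  exact le_of_tendsto hlim (eventually_mem_nhdsWithin.mono fun ε hε => (hbound ε hε).le)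

theorem IsCompact.exists_nonpos_forall_lt_pos {Y : Type*} [TopologicalSpace Y] [T2Space Y]
    {S : Set Y} (hS : IsCompact S) {w τ : Y → ℝ} (hw : ContinuousOn w S) (hτ : Continuous τ)
    (hne : ∃ y ∈ S, w y ≤ 0) :
    ∃ y ∈ S, w y ≤ 0 ∧ ∀ z ∈ S, τ z < τ y → 0 < w z := by
  have hbad : IsCompact (S ∩ w ⁻¹' Iic 0) :=
    hS.of_isClosed_subset (hw.preimage_isClosed_of_isClosed hS.isClosed isClosed_Iic)
      inter_subset_left
  obtain ⟨y₀, hy₀S, hy₀⟩ := hne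
  obtain ⟨y, ⟨hyS, hy⟩, hmin⟩ := hbad.exists_isMinOn ⟨y₀, hy₀S, hy₀⟩ hτ.continuousOn
  exact ⟨y, hyS, hy, fun z hz hzy => lt_of_not_ge fun hwz => (hmin ⟨hz, hwz⟩).not_gt hzy⟩

theorem isCompact_charTriangle (dmin dmax x₀ t₀ : ℝ) :
    IsCompact (charTriangle dmin dmax x₀ t₀) := by
  refine Metric.isCompact_of_isClosed_isBounded ?_ ?_
  · simp only [charTriangle, ofPred_and]
    apply_rules [IsClosed.inter, isClosed_le] <;> fun_prop
  · refine ((Metric.isBounded_Icc (x₀ - |dmax| * t₀) (x₀ + |dmin| * t₀)).prod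
      (Metric.isBounded_Icc 0 t₀)).subset ?_
    rintro ⟨x, t⟩ ⟨ht0, htt₀, hxl, hxr⟩
    refine ⟨⟨?_, ?_⟩, ht0, htt₀⟩
    · nlinarith [le_abs_self dmax, abs_nonneg dmax]
    · nlinarith [neg_abs_le dmin, abs_nonneg dmin]

theorem charLine_mem_charTriangle {dmin dmax x₀ t₀ x t c s : ℝ}
    (hq : (x, t) ∈ charTriangle dmin dmax x₀ t₀) (hc : c ∈ Icc dmin dmax) (hs : s ∈ Icc 0 t) :
    (x + c * (s - t), s) ∈ charTriangle dmin dmax x₀ t₀ := by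
  obtain ⟨-, htt₀, hxl, hxr⟩ := hq
  refine ⟨hs.1, hs.2.trans htt₀, ?_, ?_⟩
  · nlinarith [mul_nonneg (sub_nonneg.2 hc.2) (sub_nonneg.2 hs.2)]
  · nlinarith [mul_nonneg (sub_nonneg.2 hc.1) (sub_nonneg.2 hs.2)]

theorem mem_charBase_of_mem_charTriangle {dmin dmax x₀ t₀ x : ℝ}
    (hq : (x, 0) ∈ charTriangle dmin dmax x₀ t₀) : x ∈ charBase dmin dmax x₀ t₀ := by
  simpa [charBase] using hq.2.2

theorem lemma2_positivity_general (p₁ p₂ : ℝ)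
    (L : C(Icc p₁ p₂, ℝ) →L[ℝ] C(Icc p₁ p₂, ℝ))
    (K : ℝ)
    (hVII : ∀ u : C(Icc p₁ p₂, ℝ), (∀ p, 0 < u p) → ∀ p, 0 < L u p - K * u p)
    (h : C(Icc p₁ p₂, ℝ)) (hLh : L h = 0) (hh : ∀ p, 0 < h p)
    (D : C(Icc p₁ p₂, ℝ)) (dmin dmax : ℝ)
    (hdmin : IsLeast (range fun p => D p) dmin)
    (hdmax : IsGreatest (range fun p => D p) dmax)
    (x₀ t₀ : ℝ)
    (u ut ux : ℝ → ℝ → C(Icc p₁ p₂, ℝ))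
    (u0 : ℝ → Icc p₁ p₂ → ℝ)
    (f : ℝ → ℝ → Icc p₁ p₂ → ℝ)
    -- `u` is continuously differentiable in `(x, t)` on `ℝ × [0, t₀]`,
    -- with partial derivatives `ut` (in `t`) and `ux` (in `x`)
    (hu_cont : ContinuousOn (fun q : ℝ × ℝ => u q.1 q.2) (univ ×ˢ Icc 0 t₀))
    (hut : ∀ x : ℝ, ∀ t ∈ Icc (0:ℝ) t₀,
      HasDerivWithinAt (fun s => u x s) (ut x t) (Icc 0 t₀) t)
    (hux : ∀ x : ℝ, ∀ t ∈ Icc (0:ℝ) t₀, HasDerivAt (fun y => u y t) (ux x t) x)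
    (hux_cont : ContinuousOn (fun q : ℝ × ℝ => ux q.1 q.2) (univ ×ˢ Icc 0 t₀))
    -- the transport equation holds on `Δ₀`
    (hpde : ∀ q ∈ charTriangle dmin dmax x₀ t₀, ∀ p,
      ut q.1 q.2 p + D p * ux q.1 q.2 p = L (u q.1 q.2) p + f q.1 q.2 p)
    -- initial condition
    (hinit : ∀ x : ℝ, ∀ p, u x 0 p = u0 x p)
    -- positivity of the forcing on `Δ₀` and of the initial data on `Γ₀`
    (hfpos : ∀ q ∈ charTriangle dmin dmax x₀ t₀, ∀ p, 0 < f q.1 q.2 p)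
    (hu0pos : ∀ x ∈ charBase dmin dmax x₀ t₀, ∀ p, 0 < u0 x p) :
    ∀ q ∈ charTriangle dmin dmax x₀ t₀, ∀ p, 0 < u q.1 q.2 p := by
  have hD : ∀ p, D p ∈ Icc dmin dmax := fun p => ⟨hdmin.2 ⟨p, rfl⟩, hdmax.2 ⟨p, rfl⟩⟩
  have hcont : ContinuousOn (fun z : (ℝ × ℝ) × Icc p₁ p₂ => u z.1.1 z.1.2 z.2)
      (charTriangle dmin dmax x₀ t₀ ×ˢ univ) :=
    continuous_eval.comp_continuousOn <| (hu_cont.comp continuous_fst.continuousOn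
      fun z hz => ⟨trivial, hz.1.1, hz.1.2.1⟩).prodMk continuous_snd.continuousOn
  by_contra! hneg
  obtain ⟨⟨⟨x, t⟩, p⟩, ⟨hq, -⟩, hup, hfirst⟩ :=
    ((isCompact_charTriangle dmin dmax x₀ t₀).prod isCompact_univ).exists_nonpos_forall_lt_pos
      hcont (τ := fun z => z.1.2) (by fun_prop)
      (let ⟨q, hq, p, hp⟩ := hneg; ⟨(q, p), ⟨hq, trivial⟩, hp⟩)
  have ht : t ∈ Icc 0 t₀ := ⟨hq.1, hq.2.1⟩
  have htpos : 0 < t := hq.1.lt_of_ne' fun ht0 => by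
    subst ht0
    exact hup.not_gt (hinit x p ▸ hu0pos x (mem_charBase_of_mem_charTriangle hq) p)
  have hderiv : ∀ p', HasDerivWithinAt (fun s => u (x + D p' * (s - t)) s p')
      (ut x t p' + D p' * ux x t p') (Icc 0 t) t := fun p' => by
    have hline := hasDerivWithinAt_along_line_of_partials (v := u) (d := D p') (hut x t ht)
      (fun y s hs => hux y s hs) (hux_cont _ ⟨trivial, ht⟩)
    simpa [Function.comp_def] using
      ((ContinuousMap.evalCLM ℝ p').hasFDerivAt.comp_hasDerivWithinAt t hline).mono
        (Icc_subset_Icc_right ht.2)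
  have hbefore : ∀ p', ∀ s ∈ Ico 0 t, 0 < u (x + D p' * (s - t)) s p' := fun p' s hs =>
    hfirst ((_, s), p') ⟨charLine_mem_charTriangle hq (hD p') (Ico_subset_Icc_self hs), trivial⟩
      hs.2
  have hnonneg : ∀ p', 0 ≤ u x t p' := fun p' => by
    simpa using (hderiv p').continuousWithinAt.nonneg_of_pos_Ico htpos (hbefore p')
  have hzero : u x t p = 0 := le_antisymm hup (hnonneg p)
  have hslope := (hderiv p).nonpos_of_pos_Ico htpos (hbefore p) (by simpa using hup)
  have hLu := L.apply_nonneg_of_nonneg_of_eq_zero hVII hLh hh hnonneg hzero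
  linarith [hpde _ hq p, hfpos _ hq p]

/-- **Lemma 2 (positivity principle).**  Let `L` satisfy Conditions VII and VIII.
If `u` is a continuously differentiable solution of
`uₜ + D(p) uₓ = L u + f` on the characteristic triangle `Δ₀` of `(x₀, t₀)`,
with initial values `u0 > 0` on the base `Γ₀` and forcing `f > 0` on `Δ₀`,
then `u > 0` on `Δ₀`. -/
theorem lemma2_positivity (p₁ p₂ : ℝ) (hp : p₁ < p₂)
    (L : C(Icc p₁ p₂, ℝ) →L[ℝ] C(Icc p₁ p₂, ℝ))
    (K : ℝ)
    (hVII : ∀ u : C(Icc p₁ p₂, ℝ), (∀ p, 0 < u p) → ∀ p, 0 < L u p - K * u p)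
    (h : C(Icc p₁ p₂, ℝ)) (hLh : L h = 0) (hh : ∀ p, 0 < h p)
    (D : C(Icc p₁ p₂, ℝ)) (dmin dmax : ℝ)
    (hdmin : IsLeast (range fun p => D p) dmin)
    (hdmax : IsGreatest (range fun p => D p) dmax)
    (x₀ t₀ : ℝ) (ht₀ : 0 < t₀)
    (u ut ux : ℝ → ℝ → C(Icc p₁ p₂, ℝ))
    (u0 : ℝ → Icc p₁ p₂ → ℝ)
    (f : ℝ → ℝ → Icc p₁ p₂ → ℝ)
    -- `u` is continuously differentiable in `(x, t)` on `ℝ × [0, t₀]`,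
    -- with partial derivatives `ut` (in `t`) and `ux` (in `x`)
    (hu_cont : ContinuousOn (fun q : ℝ × ℝ => u q.1 q.2) (univ ×ˢ Icc 0 t₀))
    (hut : ∀ x : ℝ, ∀ t ∈ Icc (0:ℝ) t₀,
      HasDerivWithinAt (fun s => u x s) (ut x t) (Icc 0 t₀) t)
    (hux : ∀ x : ℝ, ∀ t ∈ Icc (0:ℝ) t₀, HasDerivAt (fun y => u y t) (ux x t) x)
    (hut_cont : ContinuousOn (fun q : ℝ × ℝ => ut q.1 q.2) (univ ×ˢ Icc 0 t₀))
    (hux_cont : ContinuousOn (fun q : ℝ × ℝ => ux q.1 q.2) (univ ×ˢ Icc 0 t₀))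
    -- `f` is continuous
    (hf_cont : ContinuousOn (fun q : ℝ × ℝ × Icc p₁ p₂ => f q.1 q.2.1 q.2.2)
      (univ ×ˢ Icc 0 t₀ ×ˢ univ))
    -- the transport equation holds on `Δ₀`
    (hpde : ∀ q ∈ charTriangle dmin dmax x₀ t₀, ∀ p,
      ut q.1 q.2 p + D p * ux q.1 q.2 p = L (u q.1 q.2) p + f q.1 q.2 p)
    -- initial condition
    (hinit : ∀ x : ℝ, ∀ p, u x 0 p = u0 x p)
    -- positivity of the forcing on `Δ₀` and of the initial data on `Γ₀`
    (hfpos : ∀ q ∈ charTriangle dmin dmax x₀ t₀, ∀ p, 0 < f q.1 q.2 p)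
    (hu0pos : ∀ x ∈ charBase dmin dmax x₀ t₀, ∀ p, 0 < u0 x p) :
    ∀ q ∈ charTriangle dmin dmax x₀ t₀, ∀ p, 0 < u q.1 q.2 p :=
  lemma2_positivity_general p₁ p₂ L K hVII h hLh hh D dmin dmax hdmin hdmax x₀ t₀ u ut ux u0 f
    hu_cont hut hux hux_cont hpde hinit hfpos hu0pos
end

section
/- Let p₁ < p₂ be real numbers, P = [p₁, p₂], let L be a continuous linear operator on C(P, ℝ) satisfying Condition VII (there exists a constant K such that for every u ∈ C(P, ℝ) with u(p) > 0 for all p ∈ P, one has (L u)(p) − K·u(p) > 0 for all p ∈ P) and Condition VIII (there exists h ∈ C(P, ℝ) with L h = 0 and h(p) > 0 on P). Let D ∈ C(P, ℝ) and T > 0. For i = 1, 2 let uᵢ : ℝ × [0, T] → C(P, ℝ) be continuously differentiable in (x, t) and fᵢ : ℝ × [0, T] × P → ℝ be continuous, satisfying ∂ₜ uᵢ(x, t)(p) + D(p)·∂ₓ uᵢ(x, t)(p) = (L (uᵢ(x, t)))(p) + fᵢ(x, t, p) for all x ∈ ℝ, t ∈ [0, T], p ∈ P, with initial values uᵢ(x,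 0)(p) = uᵢ⁰(x, p). If u₁⁰(x, p) > |u₂⁰(x, p)| for all x ∈ ℝ, p ∈ P, and f₁(x, t, p) > |f₂(x, t, p)| for all x ∈ ℝ, t ∈ [0, T], p ∈ P, then u₁(x, t)(p) > |u₂(x, t)(p)| for all x ∈ ℝ, t ∈ [0, T], p ∈ P. -/
open Set Filter Topology Asymptotics

/-!
Both `u₁ - u₂` and `u₁ + u₂` solve the transport equation with positive forcing and positive
initial data, so it suffices to show that such a solution `w` stays positive. If it does not,
take a point where `w ≤ 0` and, in its backward cone of slope `‖D‖`, the earliest time `τ` at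
which some `w(x, τ)(p) ≤ 0`. Then `w(x, τ) ≥ 0` with `w(x, τ)(p) = 0`, so Condition VII applied
to `w(x, τ) + ε` gives `(L w(x, τ))(p) ≥ 0` as `ε → 0`, and the equation yields
`∂ₜw + D(p) ∂ₓw > 0` there. Hence `w(·)(p)` strictly increases along the characteristic
`s ↦ (x + D(p) (s - τ), s)` at `τ`, so it is negative slightly before `τ` at a point of the cone.
-/

theorem hasDerivWithinAt_along_line {f fx : ℝ → ℝ → ℝ}
    {s : Set ℝ} {x₀ t₀ a c : ℝ}
    (hft : HasDerivWithinAt (f x₀) a s t₀)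
    (hfx : ∀ y, ∀ t ∈ s, HasDerivAt (f · t) (fx y t) y)
    (hfx_cont : ContinuousWithinAt (Function.uncurry fx) (univ ×ˢ s) (x₀, t₀)) :
    HasDerivWithinAt (fun t => f (x₀ + c * (t - t₀)) t) (a + c * fx x₀ t₀) s t₀ := by
  set m := fx x₀ t₀
  suffices hg : HasDerivWithinAt (fun t => f (x₀ + c * (t - t₀)) t - f x₀ t) (c * m) s t₀ by
    exact (hft.add hg).congr (fun t _ => by simp) (by simp)
  rw [hasDerivWithinAt_iff_isLittleO, isLittleO_iff]
  intro ε hε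
  obtain ⟨δ, hδ, hfxδ⟩ :=
    Metric.continuousWithinAt_iff.mp hfx_cont (ε / (|c| + 1)) (by positivity)
  have hnear : ∀ᶠ t in 𝓝[s] t₀, t ∈ s ∧ |t - t₀| < δ / (|c| + 1) :=
    eventually_mem_nhdsWithin.and <| nhdsWithin_le_nhds <| Metric.eventually_nhds_iff.mpr
      ⟨δ / (|c| + 1), by positivity, fun _ ht => by rwa [Real.dist_eq] at ht⟩
  filter_upwards [hnear] with t ⟨hts, htδ⟩
  rw [lt_div_iff₀ (by positivity)] at htδ
  have hbound :
      ∀ y ∈ Metric.closedBall x₀ (|c| * |t - t₀|), ‖fx y t - m‖ ≤ ε / (|c| + 1) := by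
    intro y hy
    refine (hfxδ (x := (y, t)) ⟨mem_univ _, hts⟩ ?_).le
    rw [Metric.mem_closedBall, Real.dist_eq] at hy
    rw [Prod.dist_eq, Real.dist_eq, Real.dist_eq]
    exact max_lt (by nlinarith [abs_nonneg (t - t₀)])
      (by dsimp only; nlinarith [abs_nonneg (t - t₀), abs_nonneg c])
  have hmvt :=
    (convex_closedBall x₀ (|c| * |t - t₀|)).norm_image_sub_le_of_norm_hasDerivWithin_le
      (f := fun y => f y t - m * y) (fun y _ => ((hfx y t hts).sub
        ((hasDerivAt_id y).const_mul m)).hasDerivWithinAt.congr_deriv (by simp)) hbound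
      (Metric.mem_closedBall_self (by positivity)) (y := x₀ + c * (t - t₀)) (by simp)
  calc ‖f (x₀ + c * (t - t₀)) t - f x₀ t - (f (x₀ + c * (t₀ - t₀)) t₀ - f x₀ t₀)
        - (t - t₀) • (c * m)‖
      = ‖f (x₀ + c * (t - t₀)) t - m * (x₀ + c * (t - t₀)) - (f x₀ t - m * x₀)‖ := by
        congr 1; simp only [sub_self, mul_zero, add_zero, smul_eq_mul]; ring
    _ ≤ ε / (|c| + 1) * ‖x₀ + c * (t - t₀) - x₀‖ := hmvt
    _ ≤ ε * ‖t - t₀‖ := by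
        rw [add_sub_cancel_left, norm_mul, Real.norm_eq_abs, Real.norm_eq_abs, ← mul_assoc]
        gcongr
        rw [div_mul_eq_mul_div, div_le_iff₀ (by positivity)]
        nlinarith [abs_nonneg c]

theorem HasDerivWithinAt.exists_lt_of_pos_left {φ : ℝ → ℝ} {a b φ' : ℝ} (hab : a < b)
    (h : HasDerivWithinAt φ φ' (Ioo a b) b) (hpos : 0 < φ') : ∃ r ∈ Ioo a b, φ r < φ b := by
  have hslope := (hasDerivWithinAt_iff_tendsto_slope' (by simp)).mp h
  have := right_nhdsWithin_Ioo_neBot hab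
  obtain ⟨r, hr, hrab⟩ :=
    ((hslope.eventually (lt_mem_nhds hpos)).and eventually_mem_nhdsWithin).exists
  exact ⟨r, hrab, (slope_pos_iff_gt hrab.2).mp hr⟩

theorem LinearMap.apply_sub_mul_nonneg_of_nonneg {X : Type*} [TopologicalSpace X]
    {L : C(X, ℝ) →ₗ[ℝ] C(X, ℝ)} {K : ℝ}
    (hL : ∀ u : C(X, ℝ), (∀ p, 0 < u p) → ∀ p, 0 < L u p - K * u p)
    {u : C(X, ℝ)} (hu : ∀ p, 0 ≤ u p) (p : X) : 0 ≤ L u p - K * u p := by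
  have hpert : ∀ ε > (0 : ℝ), 0 < L u p - K * u p + ε * (L 1 p - K) := by
    intro ε hε
    have := hL (u + ε • 1) (fun q => by simp; linarith [hu q]) p
    simp only [map_add, map_smul, ContinuousMap.add_apply, ContinuousMap.smul_apply,
      ContinuousMap.one_apply, smul_eq_mul] at this
    linarith
  have hlim : Tendsto (fun ε => L u p - K * u p + ε * (L 1 p - K)) (𝓝[>] 0)
      (𝓝 (L u p - K * u p + 0 * (L 1 p - K))) :=
    (Continuous.tendsto (by fun_prop) 0).mono_left nhdsWithin_le_nhds
  rw [zero_mul, add_zero] at hlim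
  exact ge_of_tendsto hlim (eventually_mem_nhdsWithin.mono fun ε hε => (hpert ε hε).le)

def backwardCone (M x₀ t₀ : ℝ) : Set (ℝ × ℝ) :=
  {q | q.2 ∈ Icc 0 t₀ ∧ |q.1 - x₀| ≤ M * (t₀ - q.2)}

theorem isCompact_backwardCone {M : ℝ} (hM : 0 ≤ M) (x₀ t₀ : ℝ) :
    IsCompact (backwardCone M x₀ t₀) := by
  have hclosed : IsClosed (backwardCone M x₀ t₀) :=
    (isClosed_Icc.preimage continuous_snd).inter
      (isClosed_le (by fun_prop : Continuous fun q : ℝ × ℝ => |q.1 - x₀|) (by fun_prop))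
  refine ((isCompact_Icc (a := x₀ - M * t₀) (b := x₀ + M * t₀)).prod
    (isCompact_Icc (a := 0) (b := t₀))).of_isClosed_subset hclosed ?_
  rintro ⟨x, t⟩ ⟨ht, hx⟩
  have : |x - x₀| ≤ M * t₀ := hx.trans (by nlinarith [ht.1])
  rw [abs_le] at this
  exact ⟨⟨by linarith, by linarith⟩, ht⟩

theorem mem_backwardCone_of_characteristic {M x₀ t₀ x τ c r : ℝ}
    (hq : (x, τ) ∈ backwardCone M x₀ t₀) (hc : |c| ≤ M) (hr : r ∈ Icc 0 τ) :
    (x + c * (r - τ), r) ∈ backwardCone M x₀ t₀ := by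
  obtain ⟨⟨hτ0, hτt⟩, hx⟩ := hq
  refine ⟨⟨hr.1, hr.2.trans hτt⟩, ?_⟩
  calc |x + c * (r - τ) - x₀| ≤ |x - x₀| + |c| * (τ - r) := by
        rw [show x + c * (r - τ) - x₀ = (x - x₀) + c * (r - τ) by ring]
        refine (abs_add_le _ _).trans ?_
        rw [abs_mul, abs_sub_comm r, abs_of_nonneg (sub_nonneg.mpr hr.2)]
    _ ≤ M * (t₀ - r) := by nlinarith [hr.2]

theorem IsCompact.exists_earliest_nonpos {X : Type*} [TopologicalSpace X] [CompactSpace X]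
    {Q : Set (ℝ × ℝ)} (hQ : IsCompact Q) {w : ℝ × ℝ → C(X, ℝ)} (hw : ContinuousOn w Q)
    (hne : ∃ q ∈ Q, ∃ p, w q p ≤ 0) :
    ∃ q ∈ Q, ∃ p, w q p ≤ 0 ∧ ∀ q' ∈ Q, q'.2 < q.2 → ∀ p, 0 < w q' p := by
  set S : Set ((ℝ × ℝ) × X) := Q ×ˢ univ ∩ (fun z => w z.1 z.2) ⁻¹' Iic 0
  have hS : IsCompact S := by
    refine (hQ.prod isCompact_univ).of_isClosed_subset ?_ inter_subset_left
    exact ContinuousOn.preimage_isClosed_of_isClosed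
      (continuous_eval.comp_continuousOn ((hw.comp continuousOn_fst fun z hz => hz.1).prodMk
        continuousOn_snd)) (hQ.isClosed.prod isClosed_univ) isClosed_Iic
  obtain ⟨q₀, hq₀, p₀, hp₀⟩ := hne
  obtain ⟨⟨q, p⟩, ⟨⟨hq, -⟩, hp⟩, hmin⟩ :=
    hS.exists_isMinOn ⟨(q₀, p₀), ⟨hq₀, mem_univ _⟩, hp₀⟩
      (continuous_snd.comp continuous_fst).continuousOn
  refine ⟨q, hq, p, hp, fun q' hq' hlt p' => ?_⟩
  by_contra! hp'
  exact hlt.not_ge (hmin (a := (q', p')) ⟨⟨hq', mem_univ _⟩, hp'⟩)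

theorem pos_of_transport_supersolution {X : Type*} [TopologicalSpace X] [CompactSpace X]
    {L : C(X, ℝ) →ₗ[ℝ] C(X, ℝ)} {K : ℝ}
    (hL : ∀ u : C(X, ℝ), (∀ p, 0 < u p) → ∀ p, 0 < L u p - K * u p)
    {D : C(X, ℝ)} {T : ℝ} {w wt wx : ℝ → ℝ → C(X, ℝ)}
    (hw : ContinuousOn (fun q : ℝ × ℝ => w q.1 q.2) (univ ×ˢ Icc 0 T))
    (hwt : ∀ x, ∀ t ∈ Icc (0 : ℝ) T, HasDerivWithinAt (fun s => w x s) (wt x t) (Icc 0 T) t)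
    (hwx : ∀ x, ∀ t ∈ Icc (0 : ℝ) T, HasDerivAt (fun y => w y t) (wx x t) x)
    (hwx_cont : ContinuousOn (fun q : ℝ × ℝ => wx q.1 q.2) (univ ×ˢ Icc 0 T))
    (hsuper : ∀ x, ∀ t ∈ Icc (0 : ℝ) T, ∀ p, L (w x t) p < wt x t p + D p * wx x t p)
    (hinit : ∀ x p, 0 < w x 0 p) :
    ∀ x, ∀ t ∈ Icc (0 : ℝ) T, ∀ p, 0 < w x t p := by
  intro x₀ t₀ ht₀ p₀
  by_contra! hneg
  have hD : ∀ p, |D p| ≤ ‖D‖ := fun p => by simpa using D.norm_coe_le_norm p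
  set Q := backwardCone ‖D‖ x₀ t₀
  have hQT : Q ⊆ univ ×ˢ Icc 0 T := fun q hq => ⟨mem_univ _, hq.1.1, hq.1.2.trans ht₀.2⟩
  obtain ⟨⟨xb, τ⟩, hq, pb, hwb, hfirst⟩ :=
    (isCompact_backwardCone (norm_nonneg D) x₀ t₀).exists_earliest_nonpos (hw.mono hQT)
      ⟨(x₀, t₀), ⟨⟨ht₀.1, le_rfl⟩, by simp⟩, p₀, hneg⟩
  have hτT : τ ∈ Icc 0 T := (hQT hq).2
  have hτ : 0 < τ := hτT.1.lt_of_ne fun h => (hinit xb pb).not_ge (h ▸ hwb)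
  have hchar : ∀ c, |c| ≤ ‖D‖ → ∀ r ∈ Ioo 0 τ, ∀ p, 0 < w (xb + c * (r - τ)) r p :=
    fun c hc r hr =>
      hfirst _ (mem_backwardCone_of_characteristic hq hc ⟨hr.1.le, hr.2.le⟩) hr.2
  have hwt_apply : ∀ x, ∀ t ∈ Icc (0 : ℝ) T, ∀ p,
      HasDerivWithinAt (fun s => w x s p) (wt x t p) (Icc 0 T) t := by
    intro x t ht p
    exact (ContinuousMap.evalCLM ℝ p).hasFDerivAt.comp_hasDerivWithinAt t (hwt x t ht)
  have hIoo : Ioo 0 τ ⊆ Icc 0 T := Ioo_subset_Icc_self.trans (Icc_subset_Icc le_rfl hτT.2)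
  have := right_nhdsWithin_Ioo_neBot hτ
  have hslice : ∀ p, 0 ≤ w xb τ p := fun p =>
    ge_of_tendsto ((hwt_apply xb τ hτT p).continuousWithinAt.mono hIoo)
      (eventually_mem_nhdsWithin.mono fun r hr => by simpa using (hchar 0 (by simp) r hr p).le)
  have hzero : w xb τ pb = 0 := le_antisymm hwb (hslice pb)
  have hLw : 0 ≤ L (w xb τ) pb := by
    simpa [hzero] using LinearMap.apply_sub_mul_nonneg_of_nonneg hL hslice pb
  have hφ : HasDerivWithinAt (fun r => w (xb + D pb * (r - τ)) r pb)
      (wt xb τ pb + D pb * wx xb τ pb) (Ioo 0 τ) τ :=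
    (hasDerivWithinAt_along_line (f := fun x t => w x t pb) (fx := fun x t => wx x t pb)
      (hwt_apply xb τ hτT pb)
      (fun y t ht => by
        exact (ContinuousMap.evalCLM ℝ pb).hasFDerivAt.comp_hasDerivAt y (hwx y t ht))
      ((continuous_eval_const pb).comp_continuousOn hwx_cont (xb, τ) ⟨mem_univ _, hτT⟩)).mono
      hIoo
  obtain ⟨r, hr, hφr⟩ := hφ.exists_lt_of_pos_left hτ (by linarith [hsuper xb τ hτT pb])
  simp only [sub_self, mul_zero, add_zero, hzero] at hφr
  exact hφr.not_ge (hchar (D pb) (hD pb) r hr pb).le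

theorem lemma3_barriers_general (p₁ p₂ : ℝ)
    (L : C(Icc p₁ p₂, ℝ) →L[ℝ] C(Icc p₁ p₂, ℝ))
    (K : ℝ)
    (hVII : ∀ u : C(Icc p₁ p₂, ℝ), (∀ p, 0 < u p) → ∀ p, 0 < L u p - K * u p)
    (D : C(Icc p₁ p₂, ℝ)) (T : ℝ)
    (u₁ u₁t u₁x u₂ u₂t u₂x : ℝ → ℝ → C(Icc p₁ p₂, ℝ))
    (u₁0 u₂0 : ℝ → Icc p₁ p₂ → ℝ)
    (f₁ f₂ : ℝ → ℝ → Icc p₁ p₂ → ℝ)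
    -- `u₁` is continuously differentiable in `(x, t)` on `ℝ × [0, T]`
    (hu₁_cont : ContinuousOn (fun q : ℝ × ℝ => u₁ q.1 q.2) (univ ×ˢ Icc 0 T))
    (hu₁t : ∀ x : ℝ, ∀ t ∈ Icc (0:ℝ) T,
      HasDerivWithinAt (fun s => u₁ x s) (u₁t x t) (Icc 0 T) t)
    (hu₁x : ∀ x : ℝ, ∀ t ∈ Icc (0:ℝ) T, HasDerivAt (fun y => u₁ y t) (u₁x x t) x)
    (hu₁x_cont : ContinuousOn (fun q : ℝ × ℝ => u₁x q.1 q.2) (univ ×ˢ Icc 0 T))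
    -- `u₂` is continuously differentiable in `(x, t)` on `ℝ × [0, T]`
    (hu₂_cont : ContinuousOn (fun q : ℝ × ℝ => u₂ q.1 q.2) (univ ×ˢ Icc 0 T))
    (hu₂t : ∀ x : ℝ, ∀ t ∈ Icc (0:ℝ) T,
      HasDerivWithinAt (fun s => u₂ x s) (u₂t x t) (Icc 0 T) t)
    (hu₂x : ∀ x : ℝ, ∀ t ∈ Icc (0:ℝ) T, HasDerivAt (fun y => u₂ y t) (u₂x x t) x)
    (hu₂x_cont : ContinuousOn (fun q : ℝ × ℝ => u₂x q.1 q.2) (univ ×ˢ Icc 0 T))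
    -- the transport equations
    (hpde₁ : ∀ x : ℝ, ∀ t ∈ Icc (0:ℝ) T, ∀ p,
      u₁t x t p + D p * u₁x x t p = L (u₁ x t) p + f₁ x t p)
    (hpde₂ : ∀ x : ℝ, ∀ t ∈ Icc (0:ℝ) T, ∀ p,
      u₂t x t p + D p * u₂x x t p = L (u₂ x t) p + f₂ x t p)
    -- initial conditions
    (hinit₁ : ∀ x : ℝ, ∀ p, u₁ x 0 p = u₁0 x p)
    (hinit₂ : ∀ x : ℝ, ∀ p, u₂ x 0 p = u₂0 x p)
    -- barrier hypotheses
    (hbar0 : ∀ x : ℝ, ∀ p, |u₂0 x p| < u₁0 x p)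
    (hbarf : ∀ x : ℝ, ∀ t ∈ Icc (0:ℝ) T, ∀ p, |f₂ x t p| < f₁ x t p) :
    ∀ x : ℝ, ∀ t ∈ Icc (0:ℝ) T, ∀ p, |u₂ x t p| < u₁ x t p := by
  have hpos : ∀ σ : ℝ, |σ| = 1 → ∀ x, ∀ t ∈ Icc (0 : ℝ) T, ∀ p,
      0 < u₁ x t p + σ * u₂ x t p := by
    intro σ hσ
    have hdom : ∀ a b : ℝ, |b| < a → 0 < a + σ * b := fun a b hab => by
      have := neg_abs_le (σ * b)
      rw [abs_mul, hσ, one_mul] at this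
      linarith
    simpa using pos_of_transport_supersolution (L := L.toLinearMap) (D := D) hVII
      (w := fun x t => u₁ x t + σ • u₂ x t) (wt := fun x t => u₁t x t + σ • u₂t x t)
      (wx := fun x t => u₁x x t + σ • u₂x x t)
      (hu₁_cont.add (hu₂_cont.const_smul σ))
      (fun x t ht => (hu₁t x t ht).add ((hu₂t x t ht).const_smul σ))
      (fun x t ht => (hu₁x x t ht).add ((hu₂x x t ht).const_smul σ))
      (hu₁x_cont.add (hu₂x_cont.const_smul σ))
      (fun x t ht p => by
        simp only [map_add, map_smul, ContinuousMap.add_apply, ContinuousMap.smul_apply,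
          smul_eq_mul, ContinuousLinearMap.coe_coe]
        linear_combination hdom _ _ (hbarf x t ht p) - hpde₁ x t ht p - σ * hpde₂ x t ht p)
      (fun x p => by simpa [hinit₁, hinit₂] using hdom _ _ (hbar0 x p))
  intro x t ht p
  have hplus := hpos 1 (by simp) x t ht p
  have hminus := hpos (-1) (by simp) x t ht p
  exact abs_lt.mpr ⟨by linarith, by linarith⟩

/-- **Lemma 3 (lemma on barriers).**  Let `L` satisfy Conditions VII and VIII.
If `u₁, u₂` solve `uᵢₜ + D(p) uᵢₓ = L uᵢ + fᵢ` on `ℝ × [0, T]` with initial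
data `uᵢ⁰`, and `u₁⁰ > |u₂⁰|`, `f₁ > |f₂|` everywhere, then `u₁ > |u₂|`
everywhere on `ℝ × [0, T]`. -/
theorem lemma3_barriers (p₁ p₂ : ℝ) (hp : p₁ < p₂)
    (L : C(Icc p₁ p₂, ℝ) →L[ℝ] C(Icc p₁ p₂, ℝ))
    (K : ℝ)
    (hVII : ∀ u : C(Icc p₁ p₂, ℝ), (∀ p, 0 < u p) → ∀ p, 0 < L u p - K * u p)
    (h : C(Icc p₁ p₂, ℝ)) (hLh : L h = 0) (hh : ∀ p, 0 < h p)
    (D : C(Icc p₁ p₂, ℝ)) (T : ℝ) (hT : 0 < T)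
    (u₁ u₁t u₁x u₂ u₂t u₂x : ℝ → ℝ → C(Icc p₁ p₂, ℝ))
    (u₁0 u₂0 : ℝ → Icc p₁ p₂ → ℝ)
    (f₁ f₂ : ℝ → ℝ → Icc p₁ p₂ → ℝ)
    -- `u₁` is continuously differentiable in `(x, t)` on `ℝ × [0, T]`
    (hu₁_cont : ContinuousOn (fun q : ℝ × ℝ => u₁ q.1 q.2) (univ ×ˢ Icc 0 T))
    (hu₁t : ∀ x : ℝ, ∀ t ∈ Icc (0:ℝ) T,
      HasDerivWithinAt (fun s => u₁ x s) (u₁t x t) (Icc 0 T) t)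
    (hu₁x : ∀ x : ℝ, ∀ t ∈ Icc (0:ℝ) T, HasDerivAt (fun y => u₁ y t) (u₁x x t) x)
    (hu₁t_cont : ContinuousOn (fun q : ℝ × ℝ => u₁t q.1 q.2) (univ ×ˢ Icc 0 T))
    (hu₁x_cont : ContinuousOn (fun q : ℝ × ℝ => u₁x q.1 q.2) (univ ×ˢ Icc 0 T))
    -- `u₂` is continuously differentiable in `(x, t)` on `ℝ × [0, T]`
    (hu₂_cont : ContinuousOn (fun q : ℝ × ℝ => u₂ q.1 q.2) (univ ×ˢ Icc 0 T))
    (hu₂t : ∀ x : ℝ, ∀ t ∈ Icc (0:ℝ) T,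
      HasDerivWithinAt (fun s => u₂ x s) (u₂t x t) (Icc 0 T) t)
    (hu₂x : ∀ x : ℝ, ∀ t ∈ Icc (0:ℝ) T, HasDerivAt (fun y => u₂ y t) (u₂x x t) x)
    (hu₂t_cont : ContinuousOn (fun q : ℝ × ℝ => u₂t q.1 q.2) (univ ×ˢ Icc 0 T))
    (hu₂x_cont : ContinuousOn (fun q : ℝ × ℝ => u₂x q.1 q.2) (univ ×ˢ Icc 0 T))
    -- `f₁`, `f₂` are continuous
    (hf₁_cont : ContinuousOn (fun q : ℝ × ℝ × Icc p₁ p₂ => f₁ q.1 q.2.1 q.2.2)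
      (univ ×ˢ Icc 0 T ×ˢ univ))
    (hf₂_cont : ContinuousOn (fun q : ℝ × ℝ × Icc p₁ p₂ => f₂ q.1 q.2.1 q.2.2)
      (univ ×ˢ Icc 0 T ×ˢ univ))
    -- the transport equations
    (hpde₁ : ∀ x : ℝ, ∀ t ∈ Icc (0:ℝ) T, ∀ p,
      u₁t x t p + D p * u₁x x t p = L (u₁ x t) p + f₁ x t p)
    (hpde₂ : ∀ x : ℝ, ∀ t ∈ Icc (0:ℝ) T, ∀ p,
      u₂t x t p + D p * u₂x x t p = L (u₂ x t) p + f₂ x t p)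
    -- initial conditions
    (hinit₁ : ∀ x : ℝ, ∀ p, u₁ x 0 p = u₁0 x p)
    (hinit₂ : ∀ x : ℝ, ∀ p, u₂ x 0 p = u₂0 x p)
    -- barrier hypotheses
    (hbar0 : ∀ x : ℝ, ∀ p, |u₂0 x p| < u₁0 x p)
    (hbarf : ∀ x : ℝ, ∀ t ∈ Icc (0:ℝ) T, ∀ p, |f₂ x t p| < f₁ x t p) :
    ∀ x : ℝ, ∀ t ∈ Icc (0:ℝ) T, ∀ p, |u₂ x t p| < u₁ x t p :=
  lemma3_barriers_general p₁ p₂ L K hVII D T u₁ u₁t u₁x u₂ u₂t u₂x u₁0 u₂0 f₁ f₂ hu₁_cont hu₁t hu₁x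
    hu₁x_cont hu₂_cont hu₂t hu₂x hu₂x_cont hpde₁ hpde₂ hinit₁ hinit₂ hbar0 hbarf
end
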